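/- arXiv:math/0201255 — 4 statements merged into one kernel-verified Lean document; each statement's English description precedes it below -/
import Mathlib

section
/- For every ε > 0 there exists a smooth function β̃_ε : ℝ → [0,1] such that β̃_ε(r) = 1 for all r ≥ 1, β̃_ε(r) = 0 for all r ≤ e^{−1/ε}, and 2π · ∫₀^∞ (β̃_ε′(r))² · r dr ≤ 8ε (equivalently, ∫_ℂ |β̃_ε′(|z|)|² dA(z) ≤ 8ε, where dA is the Lebesgue measure on ℂ ≅ ℝ²). -/
/-!
For `r > 0` put `β(r) = φ(1 + ε log r)`, where `φ` is a smooth step from `0` on `(-∞, 0]` to `1`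
on `[1, ∞)`; then `β` vanishes for `r ≤ e^{-1/ε}` and equals `1` for `r ≥ 1`. The substitution
`t = 1 + ε log r` turns the radial energy `∫ β'(r)² r dr` into `ε ∫ φ'(t)² dt`, so it suffices
that `∫ φ'² ≤ 4 / π`. Taking for `φ'` a bump `ψ / m` with `0 ≤ ψ ≤ 1` and mass `m ≥ 9/10` gives
`∫ φ'² ≤ ∫ ψ / m² = 1 / m ≤ 10 / 9`.
-/

open MeasureTheory Real Set Filter

noncomputable def plateau (t : ℝ) : ℝ :=
  smoothTransition (20 * t) * smoothTransition (20 * (1 - t))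

lemma contDiff_plateau {n : ℕ∞} : ContDiff ℝ n plateau :=
  (smoothTransition.contDiff.comp (contDiff_const.mul contDiff_id)).mul
    (smoothTransition.contDiff.comp (contDiff_const.mul (contDiff_const.sub contDiff_id)))

lemma continuous_plateau : Continuous plateau := contDiff_plateau.continuous (n := 0)

lemma plateau_nonneg (t : ℝ) : 0 ≤ plateau t :=
  mul_nonneg (smoothTransition.nonneg _) (smoothTransition.nonneg _)

lemma plateau_le_one (t : ℝ) : plateau t ≤ 1 :=
  mul_le_one₀ (smoothTransition.le_one _) (smoothTransition.nonneg _) (smoothTransition.le_one _)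

lemma plateau_eq_zero_of_nonpos {t : ℝ} (ht : t ≤ 0) : plateau t = 0 := by
  rw [plateau, smoothTransition.zero_of_nonpos (by linarith), zero_mul]

lemma plateau_eq_zero_of_one_le {t : ℝ} (ht : 1 ≤ t) : plateau t = 0 := by
  rw [plateau, smoothTransition.zero_of_nonpos (x := 20 * (1 - t)) (by linarith), mul_zero]

lemma plateau_eq_zero_of_notMem_Ioo {t : ℝ} (ht : t ∉ Ioo 0 1) : plateau t = 0 := by
  rcases not_and_or.1 ht with ht | ht
  · exact plateau_eq_zero_of_nonpos (not_lt.1 ht)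
  · exact plateau_eq_zero_of_one_le (not_lt.1 ht)

lemma plateau_eq_one {t : ℝ} (ht : t ∈ Icc (1 / 20) (19 / 20)) : plateau t = 1 := by
  rw [plateau, smoothTransition.one_of_one_le (by linarith [ht.1]),
    smoothTransition.one_of_one_le (by linarith [ht.2]), mul_one]

lemma hasCompactSupport_plateau : HasCompactSupport plateau :=
  HasCompactSupport.intro isCompact_Icc fun _ ht ↦
    plateau_eq_zero_of_notMem_Ioo fun h ↦ ht (Ioo_subset_Icc_self h)

noncomputable def plateauMass : ℝ := ∫ t, plateau t

lemma intervalIntegral_plateau_of_one_le {t : ℝ} (ht : 1 ≤ t) :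
    ∫ s in 0..t, plateau s = plateauMass := by
  rw [intervalIntegral.integral_of_le (zero_le_one.trans ht), plateauMass]
  exact setIntegral_eq_integral_of_forall_compl_eq_zero fun s hs ↦
    plateau_eq_zero_of_notMem_Ioo fun h ↦ hs ⟨h.1, h.2.le.trans ht⟩

lemma nine_div_ten_le_plateauMass : 9 / 10 ≤ plateauMass := by
  calc (9 / 10 : ℝ) = ∫ t in Icc (1 / 20 : ℝ) (19 / 20), plateau t := by
        rw [setIntegral_congr_fun measurableSet_Icc fun t ht ↦ plateau_eq_one ht]
        norm_num
    _ ≤ plateauMass :=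
        setIntegral_le_integral (continuous_plateau.integrable_of_hasCompactSupport
          hasCompactSupport_plateau) (Eventually.of_forall plateau_nonneg)

lemma plateauMass_pos : 0 < plateauMass := by
  linarith [nine_div_ten_le_plateauMass]

noncomputable def smoothStep (t : ℝ) : ℝ := (∫ s in 0..t, plateau s) / plateauMass

lemma hasDerivAt_smoothStep (t : ℝ) : HasDerivAt smoothStep (plateau t / plateauMass) t :=
  (intervalIntegral.integral_hasDerivAt_right (continuous_plateau.intervalIntegrable _ _)
    (continuous_plateau.stronglyMeasurableAtFilter _ _) continuous_plateau.continuousAt).div_const _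

lemma deriv_smoothStep : deriv smoothStep = fun t ↦ plateau t / plateauMass :=
  funext fun t ↦ (hasDerivAt_smoothStep t).deriv

lemma differentiable_smoothStep : Differentiable ℝ smoothStep :=
  fun t ↦ (hasDerivAt_smoothStep t).differentiableAt

lemma contDiff_smoothStep {n : ℕ∞} : ContDiff ℝ n smoothStep :=
  (contDiff_infty_iff_deriv.2 ⟨differentiable_smoothStep,
    deriv_smoothStep ▸ contDiff_plateau.div_const _⟩).of_le (mod_cast le_top)

lemma smoothStep_of_nonpos {t : ℝ} (ht : t ≤ 0) : smoothStep t = 0 := by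
  rw [smoothStep, intervalIntegral.integral_congr (g := fun _ ↦ 0) fun s hs ↦
    plateau_eq_zero_of_nonpos (by rw [uIcc_of_ge ht] at hs; exact hs.2)]
  simp

lemma smoothStep_of_one_le {t : ℝ} (ht : 1 ≤ t) : smoothStep t = 1 := by
  rw [smoothStep, intervalIntegral_plateau_of_one_le ht, div_self plateauMass_pos.ne']

lemma monotone_smoothStep : Monotone smoothStep :=
  monotone_of_deriv_nonneg differentiable_smoothStep fun t ↦ by
    rw [deriv_smoothStep]; exact div_nonneg (plateau_nonneg t) plateauMass_pos.le

lemma smoothStep_mem_Icc (t : ℝ) : smoothStep t ∈ Icc 0 1 :=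
  ⟨smoothStep_of_nonpos (min_le_right t 0) ▸ monotone_smoothStep (min_le_left t 0),
    smoothStep_of_one_le (le_max_right t 1) ▸ monotone_smoothStep (le_max_left t 1)⟩

lemma integral_deriv_smoothStep_sq_le : ∫ t, deriv smoothStep t ^ 2 ≤ 10 / 9 := by
  have hm := plateauMass_pos
  calc ∫ t, deriv smoothStep t ^ 2 ≤ ∫ t, plateau t / plateauMass ^ 2 := by
        refine integral_mono_of_nonneg (Eventually.of_forall fun t ↦ sq_nonneg _)
          ((continuous_plateau.integrable_of_hasCompactSupport
            hasCompactSupport_plateau).div_const _) (Eventually.of_forall fun t ↦ ?_)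
        have : plateau t ^ 2 ≤ plateau t := by nlinarith [plateau_nonneg t, plateau_le_one t]
        simp only [deriv_smoothStep, div_pow]
        gcongr
    _ = 1 / plateauMass := by
        rw [integral_div, ← plateauMass]
        field_simp
    _ ≤ 10 / 9 := by
        rw [div_le_div_iff₀ hm (by norm_num)]
        linarith [nine_div_ten_le_plateauMass]

/-- Wherever the first factor is nonzero at some `r > 0`, the second one is `1`; it only discards
the junk values `log r = log |r|` at `r ≤ 0`. -/
noncomputable def logCutoff (φ : ℝ → ℝ) (ε r : ℝ) : ℝ :=
  φ (1 + ε * log r) * φ (exp (1 / ε) * r)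

section LogCutoff

variable {φ : ℝ → ℝ} {ε r : ℝ}

lemma one_add_mul_log_nonpos (hε : 0 < ε) (hr : 0 < r) (hra : r ≤ exp (-1 / ε)) :
    1 + ε * log r ≤ 0 := by
  have hlog : log r ≤ -1 / ε := by simpa using log_le_log hr hra
  have : ε * log r ≤ -1 := by
    calc ε * log r ≤ ε * (-1 / ε) := by gcongr
      _ = -1 := by field_simp
  linarith

lemma one_le_exp_one_div_mul (hra : exp (-1 / ε) ≤ r) : 1 ≤ exp (1 / ε) * r := by
  calc (1 : ℝ) = exp (1 / ε) * exp (-1 / ε) := by rw [← exp_add, neg_div, add_neg_cancel, exp_zero]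
    _ ≤ exp (1 / ε) * r := by gcongr

lemma logCutoff_eq_zero (hφ0 : ∀ t ≤ 0, φ t = 0) (hε : 0 < ε) (hr : r ≤ exp (-1 / ε)) :
    logCutoff φ ε r = 0 := by
  rcases le_or_gt r 0 with hr0 | hr0
  · rw [logCutoff, hφ0 (exp (1 / ε) * r) (mul_nonpos_of_nonneg_of_nonpos (exp_pos _).le hr0),
      mul_zero]
  · rw [logCutoff, hφ0 _ (one_add_mul_log_nonpos hε hr0 hr), zero_mul]

lemma logCutoff_eq_one (hφ1 : ∀ t, 1 ≤ t → φ t = 1) (hε : 0 ≤ ε) (hr : 1 ≤ r) :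
    logCutoff φ ε r = 1 := by
  have hlog : 1 ≤ 1 + ε * log r := le_add_of_nonneg_right (mul_nonneg hε (log_nonneg hr))
  have hexp : 1 ≤ exp (1 / ε) * r := one_le_mul_of_one_le_of_one_le (one_le_exp (by positivity)) hr
  rw [logCutoff, hφ1 _ hlog, hφ1 _ hexp, mul_one]

lemma logCutoff_mem_Icc (hφ : ∀ t, φ t ∈ Icc 0 1) (ε r : ℝ) : logCutoff φ ε r ∈ Icc 0 1 :=
  ⟨mul_nonneg (hφ _).1 (hφ _).1, mul_le_one₀ (hφ _).2 (hφ _).1 (hφ _).2⟩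

lemma logCutoff_eqOn (hφ0 : ∀ t ≤ 0, φ t = 0) (hφ1 : ∀ t, 1 ≤ t → φ t = 1) (hε : 0 < ε) :
    EqOn (logCutoff φ ε) (fun r ↦ φ (1 + ε * log r)) (Ioi 0) := by
  intro r (hr : 0 < r)
  rcases le_or_gt r (exp (-1 / ε)) with hra | hra
  · exact (logCutoff_eq_zero hφ0 hε hra).trans (hφ0 _ (one_add_mul_log_nonpos hε hr hra)).symm
  · rw [logCutoff, hφ1 _ (one_le_exp_one_div_mul hra.le), mul_one]

lemma contDiff_logCutoff {n : WithTop ℕ∞} (hφ : ContDiff ℝ n φ) (hφ0 : ∀ t ≤ 0, φ t = 0)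
    (hε : 0 < ε) : ContDiff ℝ n (logCutoff φ ε) := by
  refine contDiff_iff_contDiffAt.2 fun x ↦ ?_
  rcases lt_or_ge x (exp (-1 / ε)) with hx | hx
  · refine (contDiffAt_const (c := (0 : ℝ))).congr_of_eventuallyEq ?_
    filter_upwards [Iio_mem_nhds hx] with y hy using logCutoff_eq_zero hφ0 hε (le_of_lt hy)
  · have hx0 : x ≠ 0 := ((exp_pos _).trans_le hx).ne'
    exact (hφ.contDiffAt.comp x (contDiffAt_const.add
      (contDiffAt_const.mul (contDiffAt_log.2 hx0)))).mul
      (hφ.contDiffAt.comp x (contDiffAt_const.mul contDiffAt_id))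

lemma hasDerivAt_one_add_mul_log (hr : r ≠ 0) :
    HasDerivAt (fun r ↦ 1 + ε * log r) (ε / r) r := by
  simpa [div_eq_mul_inv] using ((hasDerivAt_log hr).const_mul ε).const_add 1

lemma image_one_add_mul_log_Ioi (hε : ε ≠ 0) : (fun r ↦ 1 + ε * log r) '' Ioi 0 = univ := by
  refine eq_univ_of_forall fun t ↦ ⟨exp ((t - 1) / ε), exp_pos _, ?_⟩
  simp only [log_exp]
  field_simp
  ring

lemma hasDerivAt_logCutoff (hφ : Differentiable ℝ φ) (hφ0 : ∀ t ≤ 0, φ t = 0)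
    (hφ1 : ∀ t, 1 ≤ t → φ t = 1) (hε : 0 < ε) (hr : 0 < r) :
    HasDerivAt (logCutoff φ ε) (deriv φ (1 + ε * log r) * (ε / r)) r :=
  ((hφ _).hasDerivAt.comp r (hasDerivAt_one_add_mul_log hr.ne')).congr_of_eventuallyEq
    ((logCutoff_eqOn hφ0 hφ1 hε).eventuallyEq_of_mem (Ioi_mem_nhds hr))

theorem integral_deriv_logCutoff_sq_mul (hφ : Differentiable ℝ φ) (hφ0 : ∀ t ≤ 0, φ t = 0)
    (hφ1 : ∀ t, 1 ≤ t → φ t = 1) (hε : 0 < ε) :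
    ∫ r in Ioi 0, deriv (logCutoff φ ε) r ^ 2 * r = ε * ∫ t, deriv φ t ^ 2 := by
  have hsubst := integral_image_eq_integral_abs_deriv_smul measurableSet_Ioi
    (fun r hr ↦ (hasDerivAt_one_add_mul_log (ε := ε) (ne_of_gt hr)).hasDerivWithinAt)
    (fun x hx y hy h ↦ log_injOn_pos hx hy (mul_left_cancel₀ hε.ne' (add_left_cancel h)))
    (fun t ↦ ε * deriv φ t ^ 2)
  rw [image_one_add_mul_log_Ioi hε.ne', Measure.restrict_univ, integral_const_mul] at hsubst
  rw [hsubst]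
  refine setIntegral_congr_fun measurableSet_Ioi fun r (hr : 0 < r) ↦ ?_
  rw [(hasDerivAt_logCutoff hφ hφ0 hφ1 hε hr).deriv, smul_eq_mul, abs_of_pos (div_pos hε hr)]
  field_simp

end LogCutoff

/-- logarithmic cutoff lemma.  For every `ε > 0` there exists a smooth
function `β̃_ε : ℝ → [0,1]` such that `β̃_ε r = 1` for `r ≥ 1`, `β̃_ε r = 0` for
`r ≤ exp (-1/ε)`, and `2π ∫₀^∞ (β̃_ε' r)² r dr ≤ 8 ε`. -/
theorem stmt_5 :
    ∀ ε : ℝ, 0 < ε →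
      ∃ β : ℝ → ℝ, ContDiff ℝ (⊤ : ℕ∞) β ∧
        (∀ r : ℝ, β r ∈ Set.Icc (0 : ℝ) 1) ∧
        (∀ r : ℝ, 1 ≤ r → β r = 1) ∧
        (∀ r : ℝ, r ≤ Real.exp (-1 / ε) → β r = 0) ∧
        2 * Real.pi * ∫ r in Set.Ioi (0 : ℝ), (deriv β r) ^ 2 * r ≤ 8 * ε := by
  intro ε hε
  have hφ0 : ∀ t ≤ 0, smoothStep t = 0 := fun _ ↦ smoothStep_of_nonpos
  have hφ1 : ∀ t, 1 ≤ t → smoothStep t = 1 := fun _ ↦ smoothStep_of_one_le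
  refine ⟨logCutoff smoothStep ε, contDiff_logCutoff contDiff_smoothStep hφ0 hε,
    logCutoff_mem_Icc smoothStep_mem_Icc ε, fun r ↦ logCutoff_eq_one hφ1 hε.le,
    fun r ↦ logCutoff_eq_zero hφ0 hε, ?_⟩
  rw [integral_deriv_logCutoff_sq_mul differentiable_smoothStep hφ0 hφ1 hε]
  calc 2 * π * (ε * ∫ t, deriv smoothStep t ^ 2) ≤ 2 * π * (ε * (10 / 9)) := by
        gcongr
        exact integral_deriv_smoothStep_sq_le
    _ ≤ 8 * ε := by nlinarith [pi_lt_d2]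
end

section
/- Let F be a real normed vector space and u : ℂ → F a smooth map whose energy density e_u satisfies that both z ↦ e_u(z) and z ↦ |z|·e_u(z) are Lebesgue-integrable on ℂ. For c ∈ ℂ and r ∈ ℝ with r ≠ −1, define ((c,r)·u)(z) = u((1+r)^{-1}z − c). Then the ℂ-valued integrals satisfy ∫_ℂ e_{(c,r)·u}(z) · z dA(z) = (1+r) · ( ∫_ℂ e_u(z) · z dA(z) + c · ∫_ℂ e_u(z) dA(z) ). -/
/-!
Both derivatives of `z ↦ u(a z - c)` are `a` times those of `u` at `a z - c`, so the energy density
of `(c,r)·u` is `a² e_u(a z - c)` with `a = (1+r)⁻¹`. Substituting `y = a z - c`, i.e.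
`z = a⁻¹ (y + c)`, turns the first moment into `a² · a⁻² · a⁻¹ ∫ e_u(y) (y + c) dA(y)`,
the `a⁻²` being the Jacobian of the substitution in real dimension two.
-/

open MeasureTheory

/-- The (flat) energy density of a map `u : ℂ → F`: writing `z = s + it`,
`e_u(z) = ‖∂u/∂s(z)‖² + ‖∂u/∂t(z)‖²`, expressed via the Fréchet derivative in the
directions `1` and `I`. -/
noncomputable def energyDensity {F : Type*} [NormedAddCommGroup F] [NormedSpace ℝ F]
    (u : ℂ → F) (z : ℂ) : ℝ :=
  ‖fderiv ℝ u z 1‖ ^ 2 + ‖fderiv ℝ u z Complex.I‖ ^ 2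

theorem energyDensity_comp_smul_sub {F : Type*} [NormedAddCommGroup F] [NormedSpace ℝ F]
    (u : ℂ → F) (a : ℝ) (c z : ℂ) :
    energyDensity (fun w : ℂ => u (a • w - c)) z = a ^ 2 * energyDensity u (a • z - c) := by
  have hderiv : fderiv ℝ (fun w : ℂ => u (a • w - c)) z = a • fderiv ℝ u (a • z - c) := by
    rw [fderiv_comp_smul (f := fun y : ℂ => u (y - c)), fderiv_comp_sub]
  simp only [energyDensity, hderiv, FunLike.coe_smul, Pi.smul_apply, norm_smul, mul_pow,
    Real.norm_eq_abs, sq_abs]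
  ring

theorem ContDiff.continuous_energyDensity {F : Type*} [NormedAddCommGroup F] [NormedSpace ℝ F]
    {u : ℂ → F} (hu : ContDiff ℝ 1 u) : Continuous (energyDensity u) := by
  have hfderiv : Continuous (fderiv ℝ u) := hu.continuous_fderiv one_ne_zero
  unfold energyDensity
  fun_prop

theorem MeasureTheory.Integrable.smul_self_of_norm_mul {E : Type*} [NormedAddCommGroup E]
    [NormedSpace ℝ E] [MeasurableSpace E] [OpensMeasurableSpace E] [SecondCountableTopology E]
    {μ : Measure E} {f : E → ℝ} (h : Integrable (fun x => ‖x‖ * f x) μ)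
    (hf : AEStronglyMeasurable f μ) :
    Integrable (fun x => f x • x) μ :=
  h.norm.mono' (hf.smul aestronglyMeasurable_id) <| .of_forall fun x => by
    simp only [norm_smul, norm_mul, norm_norm, mul_comm, le_refl]

theorem integral_comp_smul_sub {E G : Type*} [NormedAddCommGroup E] [NormedSpace ℝ E]
    [MeasurableSpace E] [BorelSpace E] [FiniteDimensional ℝ E] (μ : Measure E)
    [μ.IsAddHaarMeasure] [NormedAddCommGroup G] [NormedSpace ℝ G] (g : E → G) (a : ℝ) (c : E) :
    ∫ x, g (a • x - c) ∂μ = |(a ^ Module.finrank ℝ E)⁻¹| • ∫ y, g y ∂μ := by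
  rw [Measure.integral_comp_smul μ (fun y => g (y - c)), integral_sub_right_eq_self]

theorem integral_comp_smul_sub_smul_self {E : Type*} [NormedAddCommGroup E] [NormedSpace ℝ E]
    [MeasurableSpace E] [BorelSpace E] [FiniteDimensional ℝ E] (μ : Measure E)
    [μ.IsAddHaarMeasure] {f : E → ℝ} (hf : Integrable f μ)
    (hf' : Integrable (fun y => f y • y) μ) {a : ℝ} (ha : a ≠ 0) (c : E) :
    ∫ x, f (a • x - c) • x ∂μ =
      |(a ^ Module.finrank ℝ E)⁻¹| • a⁻¹ • ((∫ y, f y • y ∂μ) + (∫ y, f y ∂μ) • c) := by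
  have hpoint : ∀ x : E, f (a • x - c) • x =
      a⁻¹ • (f (a • x - c) • (a • x - c) + f (a • x - c) • c) := fun x => by
    rw [← smul_add, sub_add_cancel, smul_comm a⁻¹, inv_smul_smul₀ ha]
  simp_rw [hpoint]
  rw [integral_comp_smul_sub μ (fun y => a⁻¹ • (f y • y + f y • c)), integral_smul,
    integral_add hf' (hf.smul_const c), integral_smul_const]

/-- For a smooth map `u : ℂ → F` into a real normed vector space whose energy
density `e_u` and first moment `|z| e_u(z)` are Lebesgue-integrable on `ℂ`, and for `c ∈ ℂ`,
`r ∈ ℝ` with `r ≠ -1`, putting `((c,r)·u)(z) = u((1+r)⁻¹ z - c)`, one has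
`∫_ℂ e_{(c,r)·u}(z) · z dA = (1+r) (∫_ℂ e_u(z) · z dA + c ∫_ℂ e_u(z) dA)`. -/
theorem stmt_6 {F : Type*} [NormedAddCommGroup F] [NormedSpace ℝ F]
    (u : ℂ → F) (hu : ContDiff ℝ (⊤ : ℕ∞) u)
    (h1 : Integrable (fun z : ℂ => energyDensity u z))
    (h2 : Integrable (fun z : ℂ => ‖z‖ * energyDensity u z))
    (c : ℂ) (r : ℝ) (hr : r ≠ -1) :
    (∫ z : ℂ, energyDensity (fun w : ℂ => u (((1 + r)⁻¹ : ℝ) • w - c)) z • z) =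
      (1 + r) • ((∫ z : ℂ, energyDensity u z • z)
        + (∫ z : ℂ, energyDensity u z) • c) := by
  set a : ℝ := (1 + r)⁻¹ with ha_def
  have ha : a ≠ 0 := inv_ne_zero fun h => hr (by linarith)
  have h1' : Integrable fun z : ℂ => energyDensity u z • z :=
    h2.smul_self_of_norm_mul (hu.of_le (by simp)).continuous_energyDensity.aestronglyMeasurable
  simp_rw [energyDensity_comp_smul_sub, mul_smul]
  rw [integral_smul, integral_comp_smul_sub_smul_self volume h1 h1' ha,
    Complex.finrank_real_complex, smul_smul, smul_smul, abs_of_nonneg (by positivity),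
    mul_inv_cancel₀ (pow_ne_zero 2 ha), one_mul, ha_def, inv_inv]
end

section
/- Let F be a real normed vector space, u : ℂ → F a smooth map whose energy density e_u is Lebesgue-integrable on ℂ, and β a cutoff function. For r > −1 define u_r(z) = u((1+r)^{-1}z). Then: (a) for every r > −1, ∫_ℂ e_{u_r}(z) · β(|z|) dA(z) = ∫_ℂ e_u(z) · β((1+r)|z|) dA(z); and (b) the function r ↦ ∫_ℂ e_{u_r}(z) · β(|z|) dA(z) is differentiable at r = 0 with derivative ∫_ℂ e_u(z) · β′(|z|) · |z| dA(z). -/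
/-
Precomposing with the dilation `w ↦ c • w` multiplies the energy density by `c²`, while the change
of variables `z = c⁻¹ • w` in the plane contributes the Jacobian `c⁻²`; hence the energy is
conformally invariant and the dilation can be moved onto the cutoff, which gives (a). The
derivative in (b) is then differentiation under the integral sign: `β'` is supported in `[1, 2]`,
so `t ↦ t β'(t)` is bounded and `e_u` times that bound dominates the difference quotients.
-/

open MeasureTheory

section EnergyDensity

variable {F : Type*} [NormedAddCommGroup F] [NormedSpace ℝ F]

lemma energyDensity_comp_smul (u : ℂ → F) (c : ℝ) (z : ℂ) :
    energyDensity (fun w : ℂ => u (c • w)) z = c ^ 2 * energyDensity u (c • z) := by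
  simp only [energyDensity, fderiv_comp_smul, smul_apply, norm_smul,
    Real.norm_eq_abs, mul_pow, sq_abs]
  ring

lemma integral_energyDensity_comp_smul_mul (u : ℂ → F) {c : ℝ} (hc : c ≠ 0) (g : ℂ → ℝ) :
    ∫ z, energyDensity (fun w : ℂ => u (c • w)) z * g z
      = ∫ w, energyDensity u w * g (c⁻¹ • w) := by
  calc ∫ z, energyDensity (fun w : ℂ => u (c • w)) z * g z
      = ∫ z, c ^ 2 * (energyDensity u (c • z) * g (c⁻¹ • c • z)) := by
        simp_rw [energyDensity_comp_smul, inv_smul_smul₀ hc, mul_assoc]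
    _ = |(c ^ Module.finrank ℝ ℂ)⁻¹| • ∫ w, c ^ 2 * (energyDensity u w * g (c⁻¹ • w)) :=
        Measure.integral_comp_smul volume (fun w => c ^ 2 * (energyDensity u w * g (c⁻¹ • w))) c
    _ = ∫ w, energyDensity u w * g (c⁻¹ • w) := by
        rw [Complex.finrank_real_complex, smul_eq_mul, integral_const_mul, abs_of_pos (by positivity),
          inv_mul_cancel_left₀ (by positivity)]

end EnergyDensity

lemma deriv_eq_zero_of_notMem_Icc {β : ℝ → ℝ} {a b c₀ c₁ : ℝ}
    (hlo : ∀ t, t ≤ a → β t = c₀) (hhi : ∀ t, b ≤ t → β t = c₁) {t : ℝ}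
    (ht : t ∉ Set.Icc a b) : deriv β t = 0 := by
  rcases not_and_or.1 ht with ht | ht
  · have hβ : β =ᶠ[nhds t] fun _ => c₀ := by
      filter_upwards [Iio_mem_nhds (not_le.1 ht)] with s hs using hlo s hs.le
    rw [hβ.deriv_eq, deriv_const]
  · have hβ : β =ᶠ[nhds t] fun _ => c₁ := by
      filter_upwards [Ioi_mem_nhds (not_le.1 ht)] with s hs using hhi s hs.le
    rw [hβ.deriv_eq, deriv_const]

lemma exists_abs_mul_deriv_le_of_eventually_const {β : ℝ → ℝ} (hβ : ContDiff ℝ 1 β)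
    {a b c₀ c₁ : ℝ} (hlo : ∀ t, t ≤ a → β t = c₀) (hhi : ∀ t, b ≤ t → β t = c₁) :
    ∃ M, ∀ t, |t * deriv β t| ≤ M := by
  have hsupp : HasCompactSupport fun t => t * deriv β t :=
    HasCompactSupport.intro isCompact_Icc fun t ht => by
      rw [deriv_eq_zero_of_notMem_Icc hlo hhi ht, mul_zero]
  exact (continuous_id.mul (hβ.continuous_deriv le_rfl)).bounded_above_of_compact_support hsupp

lemma hasDerivAt_integral_mul_comp_dilation {α : Type*} [MeasurableSpace α] {μ : Measure α}
    {e ρ : α → ℝ} (he : Integrable e μ) (hρ : AEStronglyMeasurable ρ μ)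
    {β : ℝ → ℝ} (hβ : Differentiable ℝ β) {B M : ℝ} (hB : ∀ t, |β t| ≤ B)
    (hM : ∀ t, |t * deriv β t| ≤ M) :
    HasDerivAt (fun r : ℝ => ∫ a, e a * β ((1 + r) * ρ a) ∂μ)
      (∫ a, e a * (deriv β (ρ a) * ρ a) ∂μ) 0 := by
  have hmeas : ∀ r : ℝ, AEStronglyMeasurable (fun a => β ((1 + r) * ρ a)) μ := fun r =>
    hβ.continuous.comp_aestronglyMeasurable (hρ.const_mul _)
  have hbound : ∀ a, ∀ r ∈ Metric.ball (0 : ℝ) (1 / 2),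
      ‖e a * (deriv β ((1 + r) * ρ a) * ρ a)‖ ≤ |e a| * (2 * M) := by
    intro a r hr
    have hr : 1 / 2 < 1 + r := by
      have := abs_lt.1 (by simpa [Real.dist_eq] using hr); linarith
    have hM' := hM ((1 + r) * ρ a)
    rw [abs_mul, abs_mul, abs_of_pos (by linarith : 0 < 1 + r)] at hM'
    rw [Real.norm_eq_abs, abs_mul, abs_mul]
    refine mul_le_mul_of_nonneg_left ?_ (abs_nonneg _)
    nlinarith [mul_nonneg (abs_nonneg (deriv β ((1 + r) * ρ a))) (abs_nonneg (ρ a))]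
  refine (hasDerivAt_integral_of_dominated_loc_of_deriv_le (Metric.ball_mem_nhds 0 one_half_pos)
    (Filter.Eventually.of_forall fun r => he.aestronglyMeasurable.mul (hmeas r))
    ?_ ?_ (Filter.Eventually.of_forall hbound) (he.abs.mul_const _) ?_).2.congr_deriv ?_
  · exact he.mul_bdd (hmeas 0) (Filter.Eventually.of_forall fun a => hB _)
  · exact he.aestronglyMeasurable.mul
      (((measurable_deriv β).comp_aemeasurable
        (hρ.const_mul _).aemeasurable).aestronglyMeasurable.mul hρ)
  · refine Filter.Eventually.of_forall fun a r _ => ?_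
    have hlin : HasDerivAt (fun r : ℝ => (1 + r) * ρ a) (ρ a) r := by
      simpa using ((hasDerivAt_id r).const_add 1).mul_const (ρ a)
    exact ((hβ _).hasDerivAt.comp r hlin).const_mul (e a)
  · simp

theorem stmt_7_general {F : Type*} [NormedAddCommGroup F] [NormedSpace ℝ F]
    (u : ℂ → F)
    (hint : Integrable (fun z : ℂ => energyDensity u z))
    (β : ℝ → ℝ) (hβ : ContDiff ℝ (⊤ : ℕ∞) β)
    (hβ01 : ∀ t : ℝ, β t ∈ Set.Icc (0 : ℝ) 1)
    (hβ0 : ∀ t : ℝ, t ≤ 1 → β t = 0)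
    (hβ1 : ∀ t : ℝ, 2 ≤ t → β t = 1) :
    (∀ r : ℝ, -1 < r →
      (∫ z : ℂ, energyDensity (fun w : ℂ => u (((1 + r)⁻¹ : ℝ) • w)) z * β (‖z‖))
        = ∫ z : ℂ, energyDensity u z * β ((1 + r) * ‖z‖)) ∧
    HasDerivAt
      (fun r : ℝ =>
        ∫ z : ℂ, energyDensity (fun w : ℂ => u (((1 + r)⁻¹ : ℝ) • w)) z * β (‖z‖))
      (∫ z : ℂ, energyDensity u z * (deriv β (‖z‖) * ‖z‖)) 0 := by
  have dilate : ∀ r : ℝ, -1 < r →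
      (∫ z : ℂ, energyDensity (fun w : ℂ => u (((1 + r)⁻¹ : ℝ) • w)) z * β (‖z‖))
        = ∫ z : ℂ, energyDensity u z * β ((1 + r) * ‖z‖) := fun r hr => by
    have hpos : 0 < 1 + r := by linarith
    rw [integral_energyDensity_comp_smul_mul u (inv_ne_zero hpos.ne') fun z => β ‖z‖]
    simp_rw [inv_inv, norm_smul, Real.norm_of_nonneg hpos.le]
  obtain ⟨M, hM⟩ := exists_abs_mul_deriv_le_of_eventually_const (hβ.of_le (by norm_cast)) hβ0 hβ1
  have hB : ∀ t, |β t| ≤ 1 := fun t => abs_le.2 ⟨by linarith [(hβ01 t).1], (hβ01 t).2⟩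
  refine ⟨dilate, ?_⟩
  refine (hasDerivAt_integral_mul_comp_dilation hint continuous_norm.aestronglyMeasurable
    (hβ.differentiable (by norm_num)) hB hM).congr_of_eventuallyEq ?_
  filter_upwards [Ioi_mem_nhds (show (-1 : ℝ) < 0 by norm_num)] with r hr using dilate r hr

/-- Let `u : ℂ → F` be a smooth map with Lebesgue-integrable energy density,
and let `β` be a cutoff function.  For `r > -1` set `u_r(z) = u((1+r)⁻¹ z)`.  Then
(a) `∫_ℂ e_{u_r}(z) β(|z|) dA = ∫_ℂ e_u(z) β((1+r)|z|) dA` for every `r > -1`, and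
(b) `r ↦ ∫_ℂ e_{u_r}(z) β(|z|) dA` is differentiable at `r = 0` with derivative
`∫_ℂ e_u(z) β'(|z|) |z| dA`. -/
theorem stmt_7 {F : Type*} [NormedAddCommGroup F] [NormedSpace ℝ F]
    (u : ℂ → F) (hu : ContDiff ℝ (⊤ : ℕ∞) u)
    (hint : Integrable (fun z : ℂ => energyDensity u z))
    (β : ℝ → ℝ) (hβ : ContDiff ℝ (⊤ : ℕ∞) β)
    (hβ01 : ∀ t : ℝ, β t ∈ Set.Icc (0 : ℝ) 1)
    (hβ0 : ∀ t : ℝ, t ≤ 1 → β t = 0)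
    (hβ1 : ∀ t : ℝ, 2 ≤ t → β t = 1)
    (hβ' : ∀ t ∈ Set.Ioo (1 : ℝ) 2, 0 < deriv β t) :
    (∀ r : ℝ, -1 < r →
      (∫ z : ℂ, energyDensity (fun w : ℂ => u (((1 + r)⁻¹ : ℝ) • w)) z * β (‖z‖))
        = ∫ z : ℂ, energyDensity u z * β ((1 + r) * ‖z‖)) ∧
    HasDerivAt
      (fun r : ℝ =>
        ∫ z : ℂ, energyDensity (fun w : ℂ => u (((1 + r)⁻¹ : ℝ) • w)) z * β (‖z‖))
      (∫ z : ℂ, energyDensity u z * (deriv β (‖z‖) * ‖z‖)) 0 :=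
  stmt_7_general u hint β hβ hβ01 hβ0 hβ1
end

section
/- Let B be an open ball centered at 0 in ℝ^k with the Euclidean norm, let f : B → ℝ^k be differentiable, suppose A := Df|₀ is invertible, and let M ≥ 0 satisfy ‖Df|_z − A‖ ≤ M for all z ∈ B. Then for all x, y ∈ B, Σ_{i=1}^{k} |f_i(x) − f_i(y)| ≥ (‖A^{-1}‖^{-1} − k·M)·‖x − y‖, where f_1, …, f_k are the coordinate functions of f and ‖x − y‖ is the Euclidean norm. -/
lemma euclid_norm_le_sum {k : ℕ} (v : EuclideanSpace ℝ (Fin k)) :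
    ‖v‖ ≤ ∑ i : Fin k, |v i| := by
  rw [EuclideanSpace.norm_eq]
  have h : ∑ i : Fin k, ‖v i‖ ^ 2 ≤ (∑ i : Fin k, |v i|) ^ 2 := by
    rw [sq (∑ i : Fin k, |v i|), Finset.sum_mul]
    refine Finset.sum_le_sum fun i _ => ?_
    rw [Real.norm_eq_abs, sq]
    refine mul_le_mul_of_nonneg_left ?_ (abs_nonneg _)
    exact Finset.single_le_sum (fun j _ => abs_nonneg (v j)) (Finset.mem_univ i)
  calc Real.sqrt (∑ i : Fin k, ‖v i‖ ^ 2) ≤ Real.sqrt ((∑ i : Fin k, |v i|) ^ 2) :=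
        Real.sqrt_le_sqrt h
    _ = ∑ i : Fin k, |v i| := by
        rw [Real.sqrt_sq (Finset.sum_nonneg fun j _ => abs_nonneg (v j))]

/-- Let `B` be an open ball centered at `0` in `ℝ^k` (Euclidean norm), let
`f : B → ℝ^k` be differentiable with `A := Df|₀` invertible, and let `M ≥ 0` satisfy
`‖Df|_z - A‖ ≤ M` for all `z ∈ B`.  Then for all `x, y ∈ B`,
`∑ᵢ |fᵢ(x) - fᵢ(y)| ≥ (‖A⁻¹‖⁻¹ - k M) ‖x - y‖`. -/
theorem stmt_10 {k : ℕ} (R : ℝ) (hR : 0 < R)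
    (f : EuclideanSpace ℝ (Fin k) → EuclideanSpace ℝ (Fin k))
    (hf : DifferentiableOn ℝ f (Metric.ball (0 : EuclideanSpace ℝ (Fin k)) R))
    (A : EuclideanSpace ℝ (Fin k) ≃L[ℝ] EuclideanSpace ℝ (Fin k))
    (hA : fderiv ℝ f 0 = (A : EuclideanSpace ℝ (Fin k) →L[ℝ] EuclideanSpace ℝ (Fin k)))
    (M : ℝ) (hM : 0 ≤ M)
    (hDf : ∀ z ∈ Metric.ball (0 : EuclideanSpace ℝ (Fin k)) R,
      ‖fderiv ℝ f z
          - (A : EuclideanSpace ℝ (Fin k) →L[ℝ] EuclideanSpace ℝ (Fin k))‖ ≤ M) :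
    ∀ x ∈ Metric.ball (0 : EuclideanSpace ℝ (Fin k)) R,
    ∀ y ∈ Metric.ball (0 : EuclideanSpace ℝ (Fin k)) R,
      (‖(A.symm : EuclideanSpace ℝ (Fin k) →L[ℝ] EuclideanSpace ℝ (Fin k))‖⁻¹
          - (k : ℝ) * M) * ‖x - y‖
        ≤ ∑ i : Fin k, |f x i - f y i| := by
  intro x hx y hy
  rcases Nat.eq_zero_or_pos k with hk | hk
  · subst hk
    have hxy : x = y := Subsingleton.elim x y
    rw [hxy, sub_self, norm_zero, mul_zero]
    exact le_of_eq (by simp)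
  haveI hne : Nontrivial (EuclideanSpace ℝ (Fin k)) := by
    have : 0 < Module.finrank ℝ (EuclideanSpace ℝ (Fin k)) := by
      simpa using hk
    exact Module.nontrivial_of_finrank_pos this
  have hdiff : ∀ z ∈ Metric.ball (0 : EuclideanSpace ℝ (Fin k)) R,
      DifferentiableAt ℝ f z := fun z hz =>
    hf.differentiableAt (Metric.isOpen_ball.mem_nhds hz)
  have key : ‖f x - f y - (A : EuclideanSpace ℝ (Fin k) →L[ℝ] EuclideanSpace ℝ (Fin k)) (x - y)‖
      ≤ M * ‖x - y‖ :=
    (convex_ball 0 R).norm_image_sub_le_of_norm_fderiv_le' hdiff hDf hy hx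
  set N := ‖(A.symm : EuclideanSpace ℝ (Fin k) →L[ℝ] EuclideanSpace ℝ (Fin k))‖
  have hNpos : 0 < N := ContinuousLinearEquiv.norm_symm_pos A
  have hlow : N⁻¹ * ‖x - y‖ ≤ ‖(A : EuclideanSpace ℝ (Fin k) →L[ℝ] EuclideanSpace ℝ (Fin k)) (x - y)‖ := by
    have h1 : ‖x - y‖ ≤ N * ‖(A : EuclideanSpace ℝ (Fin k) →L[ℝ] EuclideanSpace ℝ (Fin k)) (x - y)‖ := by
      have := (A.symm : EuclideanSpace ℝ (Fin k) →L[ℝ] EuclideanSpace ℝ (Fin k)).le_opNorm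
        ((A : EuclideanSpace ℝ (Fin k) →L[ℝ] EuclideanSpace ℝ (Fin k)) (x - y))
      simpa using this
    rw [inv_mul_le_iff₀ hNpos]
    linarith [h1]
  have h2 : N⁻¹ * ‖x - y‖ - M * ‖x - y‖ ≤ ‖f x - f y‖ := by
    have h3 : ‖(A : EuclideanSpace ℝ (Fin k) →L[ℝ] EuclideanSpace ℝ (Fin k)) (x - y)‖
        ≤ ‖f x - f y‖ + M * ‖x - y‖ := by
      have := norm_sub_le (f x - f y)
        (f x - f y - (A : EuclideanSpace ℝ (Fin k) →L[ℝ] EuclideanSpace ℝ (Fin k)) (x - y))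
      rw [sub_sub_cancel] at this
      linarith [key, this]
    linarith [hlow]
  have h4 : ‖f x - f y‖ ≤ ∑ i : Fin k, |f x i - f y i| := by
    have := euclid_norm_le_sum (f x - f y)
    simpa using this
  have h5 : (k : ℝ) * M ≥ M := by
    nlinarith [hM, show (1:ℝ) ≤ (k:ℝ) from by exact_mod_cast hk]
  nlinarith [norm_nonneg (x - y), h2, h4, h5]
end
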